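/- arXiv:2406.05553 — 5 statements merged into one kernel-verified Lean document; each statement's English description precedes it below -/
import Mathlib

section
/- Let G be a graph, e ∉ G, K = K(G), K' = K(G ∪ {e}), and suppose the link lk_{K'}(e) is nonempty. Then K ∩ st_{K'}(e) is path-connected. -/
open scoped Classical

/-- An abstract simplicial complex on vertex set `V`: a collection of nonempty
finite subsets of `V` closed under taking nonempty subsets. -/
structure AbsCplx (V : Type*) where
  faces : Set (Finset V)
  nonempty_of_mem : ∀ s ∈ faces, s.Nonempty
  down_closed : ∀ s ∈ faces, ∀ t ⊆ s, t.Nonempty → t ∈ faces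
/-- The clique (flag) complex of a simple graph: the maximal simplicial complex
whose 1-skeleton is `G`. -/
def cliqueCplx {V : Type*} (G : SimpleGraph V) : AbsCplx V where
  faces := {s | s.Nonempty ∧ ∀ x ∈ s, ∀ y ∈ s, x ≠ y → G.Adj x y}
  nonempty_of_mem s hs := hs.1
  down_closed s hs t hts ht := ⟨ht, fun x hx y hy hxy => hs.2 x (hts hx) y (hts hy) hxy⟩

/-- The closed star of a simplex `σ` in `K`: the smallest subcomplex of `K`
containing all faces of `K` that contain `σ`. -/
def starC {V : Type*} (K : AbsCplx V) (σ : Finset V) : AbsCplx V where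
  faces := {t | t.Nonempty ∧ ∃ τ ∈ K.faces, σ ⊆ τ ∧ t ⊆ τ}
  nonempty_of_mem s hs := hs.1
  down_closed s hs t hts ht := ⟨ht, hs.2.imp fun τ hτ => ⟨hτ.1, hτ.2.1, hts.trans hτ.2.2⟩⟩

/-- The link of a simplex `σ` in `K`: the faces of the closed star that are disjoint from `σ`. -/
def linkC {V : Type*} (K : AbsCplx V) (σ : Finset V) : AbsCplx V where
  faces := {t | t ∈ (starC K σ).faces ∧ Disjoint t σ}
  nonempty_of_mem s hs := hs.1.1
  down_closed s hs t hts ht :=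
    ⟨(starC K σ).down_closed s hs.1 t hts ht,
      Finset.disjoint_left.mpr fun _ ha => Finset.disjoint_left.mp hs.2 (hts ha)⟩

/-- The intersection of two simplicial complexes. -/
def interC {V : Type*} (K L : AbsCplx V) : AbsCplx V where
  faces := K.faces ∩ L.faces
  nonempty_of_mem s hs := K.nonempty_of_mem s hs.1
  down_closed s hs t hts ht := ⟨K.down_closed s hs.1 t hts ht, L.down_closed s hs.2 t hts ht⟩

/-- The graph `G` with the edge `{u, v}` added. -/
def addEdge {V : Type*} (G : SimpleGraph V) (u v : V) : SimpleGraph V :=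
  G ⊔ SimpleGraph.fromEdgeSet {s(u, v)}

/-- The 1-skeleton graph of a simplicial complex: two vertices are adjacent
iff they span an edge of the complex. -/
def skel {V : Type*} (K : AbsCplx V) : SimpleGraph V where
  Adj x y := x ≠ y ∧ ({x, y} : Finset V) ∈ K.faces
  symm := by
    constructor
    intro x y h
    exact ⟨h.1.symm, by rw [Finset.pair_comm]; exact h.2⟩
  loopless := ⟨fun x h => h.1 rfl⟩

/-!
A vertex `c ≠ u, v` of `K ∩ st_{K'}(e)` lies in a clique of `G ∪ {e}` containing `u` and `v`, so
it is a common neighbour of `u` and `v` in `G`; then `{c, u, v}` is a face of `K'`, so the edges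
`cu` and `cv` of `K` lie in the star. Hence every vertex other than `v` is joined to `u` by an
edge, and `v` is joined to `u` through any vertex of the link.
-/

namespace SimpleGraph

variable {V : Type*} {G : SimpleGraph V} {u v x y : V}

lemma addEdge_adj_iff :
    (addEdge G u v).Adj x y ↔ G.Adj x y ∨ (s(x, y) = s(u, v) ∧ x ≠ y) := by
  simp [addEdge, fromEdgeSet_adj]

lemma Adj.of_addEdge (h : (addEdge G u v).Adj x y) (hxu : x ≠ u) (hxv : x ≠ v) : G.Adj x y := by
  rcases addEdge_adj_iff.1 h with h | ⟨h, -⟩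
  · exact h
  · rw [Sym2.eq_iff] at h
    tauto

lemma addEdge_adj_of_ne (huv : u ≠ v) : (addEdge G u v).Adj u v :=
  addEdge_adj_iff.2 (Or.inr ⟨rfl, huv⟩)

lemma Adj.addEdge (h : G.Adj x y) : (addEdge G u v).Adj x y :=
  addEdge_adj_iff.2 (Or.inl h)

end SimpleGraph

section

open SimpleGraph

variable {V : Type*} {G : SimpleGraph V} {u v w c : V}

lemma mem_cliqueCplx_faces {s : Finset V} :
    s ∈ (cliqueCplx G).faces ↔ s.Nonempty ∧ G.IsClique (s : Set V) :=
  Iff.rfl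

lemma insert_pair_mem_cliqueCplx_addEdge (hw : w ∈ G.commonNeighbors u v) :
    ({w, u, v} : Finset V) ∈ (cliqueCplx (addEdge G u v)).faces := by
  rw [G.mem_commonNeighbors] at hw
  refine mem_cliqueCplx_faces.2 ⟨Finset.insert_nonempty _ _, ?_⟩
  rw [Finset.coe_insert, Finset.coe_pair, isClique_insert, isClique_pair]
  refine ⟨addEdge_adj_of_ne, ?_⟩
  rintro b (rfl | rfl) -
  exacts [hw.1.symm.addEdge, hw.2.symm.addEdge]

lemma mem_commonNeighbors_of_mem_cliqueCplx_addEdge {τ : Finset V}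
    (hτ : τ ∈ (cliqueCplx (addEdge G u v)).faces) (huvτ : {u, v} ⊆ τ) (hc : c ∈ τ)
    (hcu : c ≠ u) (hcv : c ≠ v) : c ∈ G.commonNeighbors u v := by
  have hu : u ∈ τ := huvτ (by simp)
  have hv : v ∈ τ := huvτ (by simp)
  exact (G.mem_commonNeighbors).2
    ⟨(hτ.2 c hc u hu hcu).of_addEdge hcu hcv |>.symm,
      (hτ.2 c hc v hv hcv).of_addEdge hcu hcv |>.symm⟩

lemma mem_commonNeighbors_of_mem_link {t : Finset V}
    (ht : t ∈ (linkC (cliqueCplx (addEdge G u v)) {u, v}).faces) (hw : w ∈ t) :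
    w ∈ G.commonNeighbors u v := by
  obtain ⟨⟨-, τ, hτ, huvτ, htτ⟩, hdisj⟩ := ht
  have hw' : w ∉ ({u, v} : Finset V) := Finset.disjoint_left.1 hdisj hw
  simp only [Finset.mem_insert, Finset.mem_singleton, not_or] at hw'
  exact mem_commonNeighbors_of_mem_cliqueCplx_addEdge hτ huvτ (htτ hw) hw'.1 hw'.2

lemma eq_or_eq_or_mem_commonNeighbors_of_mem_star
    (hc : {c} ∈ (starC (cliqueCplx (addEdge G u v)) {u, v}).faces) :
    c = u ∨ c = v ∨ c ∈ G.commonNeighbors u v := by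
  obtain ⟨-, τ, hτ, huvτ, hcτ⟩ := hc
  by_cases hcu : c = u
  · exact Or.inl hcu
  by_cases hcv : c = v
  · exact Or.inr (Or.inl hcv)
  exact Or.inr (Or.inr (mem_commonNeighbors_of_mem_cliqueCplx_addEdge hτ huvτ
    (hcτ (Finset.mem_singleton_self c)) hcu hcv))

variable (G u v) in
noncomputable def interStar : AbsCplx V :=
  interC (cliqueCplx G) (starC (cliqueCplx (addEdge G u v)) {u, v})

lemma skel_interStar_adj_of_mem_commonNeighbors (hw : w ∈ G.commonNeighbors u v) {y : V}
    (hy : y = u ∨ y = v) : (skel (interStar G u v)).Adj w y := by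
  have hwy : G.Adj w y := by
    rw [G.mem_commonNeighbors] at hw
    rcases hy with rfl | rfl
    exacts [hw.1.symm, hw.2.symm]
  refine ⟨hwy.ne, mem_cliqueCplx_faces.2 ⟨Finset.insert_nonempty _ _, ?_⟩,
    Finset.insert_nonempty _ _, {w, u, v}, insert_pair_mem_cliqueCplx_addEdge hw, ?_, ?_⟩
  · rw [Finset.coe_pair, isClique_pair]
    exact fun _ => hwy
  · exact Finset.subset_insert _ _
  · rcases hy with rfl | rfl <;> simp [Finset.insert_subset_iff]

lemma skel_interStar_reachable_left (hw : w ∈ G.commonNeighbors u v)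
    (hc : {c} ∈ (interStar G u v).faces) : (skel (interStar G u v)).Reachable c u := by
  rcases eq_or_eq_or_mem_commonNeighbors_of_mem_star hc.2 with rfl | rfl | hc
  · rfl
  · exact (skel_interStar_adj_of_mem_commonNeighbors hw (Or.inr rfl)).symm.reachable.trans
      (skel_interStar_adj_of_mem_commonNeighbors hw (Or.inl rfl)).reachable
  · exact (skel_interStar_adj_of_mem_commonNeighbors hc (Or.inl rfl)).reachable

end

theorem inter_star_connected_general {V : Type*} (G : SimpleGraph V) (u v : V)
    (hlk : (linkC (cliqueCplx (addEdge G u v)) {u, v}).faces.Nonempty) :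
    let X := interC (cliqueCplx G) (starC (cliqueCplx (addEdge G u v)) {u, v})
    ∀ a b : V, ({a} : Finset V) ∈ X.faces → ({b} : Finset V) ∈ X.faces →
      (skel X).Reachable a b := by
  intro X a b ha hb
  obtain ⟨t, ht⟩ := hlk
  obtain ⟨w, hwt⟩ := (linkC _ _).nonempty_of_mem t ht
  have hw : w ∈ G.commonNeighbors u v := mem_commonNeighbors_of_mem_link ht hwt
  exact (skel_interStar_reachable_left hw ha).trans (skel_interStar_reachable_left hw hb).symm

/-- Let `K = K(G)`, `K' = K(G ∪ {e})` with `e = (u,v) ∉ G`, and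
suppose the link `lk_{K'}(e)` is nonempty. Then `K ∩ st_{K'}(e)` is path-connected:
any two vertices of it are joined by a path in its 1-skeleton. -/
theorem inter_star_connected {V : Type*} (G : SimpleGraph V) (u v : V)
    (huv : u ≠ v) (he : ¬ G.Adj u v)
    (hlk : (linkC (cliqueCplx (addEdge G u v)) {u, v}).faces.Nonempty) :
    let X := interC (cliqueCplx G) (starC (cliqueCplx (addEdge G u v)) {u, v})
    ∀ a b : V, ({a} : Finset V) ∈ X.faces → ({b} : Finset V) ∈ X.faces →
      (skel X).Reachable a b :=
  inter_star_connected_general G u v hlk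
end

section
/- Let 𝒳 ⊂ ℝ^d be a locally finite set with all pairwise distances distinct, x ∈ 𝒳, and let Cone₁(x),…,Cone_N(x) be a fixed cover of ℝ^d by cones of angle π/3 with apex x. Define R(x;𝒳) = 2·inf{ r > 0 : |𝒳 ∩ B_r(x) ∩ Cone_i(x)| ≥ k+1 for all 1 ≤ i ≤ N }. Then the degree of x in the k-NN graph is determined locally: deg(x; 𝒳) = deg(x; 𝒳 ∩ B_{R(x;𝒳)}(x)). -/
/-!
Write `ρ` for the infimum, so `R = 2ρ`. A point `y` with `ρ < |x - y|` is never a neighbour of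
`x`: some radius `r < |x - y|` already puts `k + 1` points of `𝒳` in every cone, so `x` has
`k + 1` points at distance at most `r`, and the cone containing `y` has `k + 1` points, other
than `y`, at distance at most `|y - x|` from `y`; neither is then among the other's `k` nearest.
For `|x - y| ≤ ρ`, every point that competes with `x` or `y` in either nearest-neighbour count
lies within `2|x - y| ≤ R` of `x`, so the counts, and hence adjacency, are the same in `𝒳` and
in `𝒳 ∩ B_R(x)`.
-/

open Metric

noncomputable section

/-- The number of points of `X` (other than `x`) at least as close to `x` as `y` is. -/
def nearCount {E : Type*} [MetricSpace E] (X : Set E) (x y : E) : ℕ :=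
  (X ∩ {z | z ≠ x ∧ dist x z ≤ dist x y}).ncard

/-- Adjacency in the `k`-nearest-neighbor graph `G_k(X)`: `x` and `y` are adjacent iff
`y` is among the `k` nearest points of `X \ {x}` to `x`, or vice versa. -/
def knnAdj {E : Type*} [MetricSpace E] (k : ℕ) (X : Set E) (x y : E) : Prop :=
  x ∈ X ∧ y ∈ X ∧ x ≠ y ∧ (nearCount X x y ≤ k ∨ nearCount X y x ≤ k)

/-- The degree of `x` in the `k`-nearest-neighbor graph `G_k(X)`. -/
def knnDeg {E : Type*} [MetricSpace E] (k : ℕ) (X : Set E) (x : E) : ℕ :=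
  {y | knnAdj k X x y}.ncard

end

open Metric Set

section

variable {E : Type*} [MetricSpace E] {X Y : Set E} {x y : E} {k : ℕ}

lemma nearCount_inter_eq {B : Set E} (h : ∀ z ∈ X, dist x z ≤ dist x y → z ∈ B) :
    nearCount (X ∩ B) x y = nearCount X x y := by
  unfold nearCount
  congr 1
  ext z
  exact ⟨fun ⟨⟨hzX, _⟩, hz⟩ => ⟨hzX, hz⟩, fun ⟨hzX, hz⟩ => ⟨⟨hzX, h z hzX hz.2⟩, hz⟩⟩

lemma knnAdj_inter_closedBall_iff {R : ℝ} (h : 2 * dist x y ≤ R) :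
    knnAdj k (X ∩ closedBall x R) x y ↔ knnAdj k X x y := by
  have hxy : dist x y ≤ R := by linarith [dist_nonneg (x := x) (y := y)]
  have hx : x ∈ closedBall x R := mem_closedBall_self (dist_nonneg.trans hxy)
  have hy : y ∈ closedBall x R := mem_closedBall'.2 hxy
  have hnear_x : nearCount (X ∩ closedBall x R) x y = nearCount X x y :=
    nearCount_inter_eq fun z _ hz => mem_closedBall'.2 (hz.trans hxy)
  have hnear_y : nearCount (X ∩ closedBall x R) y x = nearCount X y x :=
    nearCount_inter_eq fun z _ hz => mem_closedBall.2 <| by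
      linarith [dist_triangle z y x, dist_comm y z, dist_comm y x]
  simp only [knnAdj, mem_inter_iff, hx, hy, and_true, hnear_x, hnear_y]

lemma ncard_inter_closedBall_le_nearCount {r : ℝ} (hfin : (X ∩ closedBall x (dist x y)).Finite)
    (hy : y ∈ X) (hyx : y ≠ x) (hr : r < dist x y) :
    (X ∩ closedBall x r).ncard ≤ nearCount X x y := by
  set near := X ∩ {z | z ≠ x ∧ dist x z ≤ dist x y}
  have hnear_fin : near.Finite :=
    hfin.subset fun z hz => ⟨hz.1, mem_closedBall'.2 hz.2.2⟩
  have hy_near : y ∈ near := ⟨hy, hyx, le_rfl⟩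
  have hsub : X ∩ closedBall x r ⊆ insert x (near \ {y}) := by
    rintro z ⟨hzX, hzr⟩
    rw [mem_closedBall'] at hzr
    by_cases hzx : z = x
    · exact Or.inl hzx
    · refine mem_insert_of_mem _ ⟨⟨hzX, hzx, by linarith⟩, fun hzy => ?_⟩
      rw [mem_singleton_iff.1 hzy] at hzr
      linarith
  calc (X ∩ closedBall x r).ncard ≤ (insert x (near \ {y})).ncard :=
        ncard_le_ncard hsub (hnear_fin.sdiff.insert x)
    _ ≤ (near \ {y}).ncard + 1 := ncard_insert_le _ _
    _ = nearCount X x y := ncard_sdiff_singleton_add_one hy_near hnear_fin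

/-- This is where the angle `π/3` enters: a point of `y`'s cone that is closer to the apex
than `y` is also no farther from `y` than the apex is. -/
lemma ncard_inter_cone_le_nearCount {C : Set E} {r : ℝ}
    (hC : ∀ y₁ ∈ C, ∀ y₂ ∈ C, dist y₁ y₂ ≤ max (dist y₁ x) (dist y₂ x)) (hyC : y ∈ C)
    (hfin : (Y ∩ closedBall y (dist y x)).Finite) (hXY : X ∩ closedBall x r ⊆ Y)
    (hr : r < dist x y) : (X ∩ closedBall x r ∩ C).ncard ≤ nearCount Y y x := by
  refine ncard_le_ncard ?_ (hfin.subset fun z hz => ⟨hz.1, mem_closedBall'.2 hz.2.2⟩)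
  rintro z ⟨hzXr, hzC⟩
  have hzx : dist z x < dist y x := by
    rw [dist_comm y x]; exact (mem_closedBall.1 hzXr.2).trans_lt hr
  refine ⟨hXY hzXr, fun hzy => by rw [hzy] at hzx; exact hzx.false, ?_⟩
  exact (hC y hyC z hzC).trans (max_eq_left hzx.le).le

lemma not_knnAdj_of_lt_dist {ι : Type*} {C : ι → Set E} {r : ℝ} (hcover : ⋃ i, C i = univ)
    (hcone : ∀ i, ∀ y₁ ∈ C i, ∀ y₂ ∈ C i, dist y₁ y₂ ≤ max (dist y₁ x) (dist y₂ x))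
    (hloc : ∀ s : ℝ, (Y ∩ closedBall x s).Finite)
    (hr : ∀ i, k + 1 ≤ (X ∩ closedBall x r ∩ C i).ncard) (hXY : X ∩ closedBall x r ⊆ Y)
    (hry : r < dist x y) : ¬ knnAdj k Y x y := by
  obtain ⟨i, hyC⟩ := mem_iUnion.1 (hcover.symm ▸ mem_univ y : y ∈ ⋃ i, C i)
  rintro ⟨-, hyY, hxy, hnear | hnear⟩
  · have hcone_ball : (X ∩ closedBall x r ∩ C i).ncard ≤ (Y ∩ closedBall x r).ncard :=
      ncard_le_ncard (fun z hz => ⟨hXY hz.1, hz.1.2⟩) (hloc r)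
    have := ncard_inter_closedBall_le_nearCount (hloc _) hyY hxy.symm hry
    linarith [hr i]
  · have hball : closedBall y (dist y x) ⊆ closedBall x (2 * dist x y) :=
      closedBall_subset_closedBall' (by rw [dist_comm y x]; linarith)
    have := ncard_inter_cone_le_nearCount (hcone i) hyC
      ((hloc _).subset (inter_subset_inter_right _ hball)) hXY hry
    linarith [hr i]

lemma dist_le_sInf_of_knnAdj {ι : Type*} {C : ι → Set E} (hcover : ⋃ i, C i = univ)
    (hcone : ∀ i, ∀ y₁ ∈ C i, ∀ y₂ ∈ C i, dist y₁ y₂ ≤ max (dist y₁ x) (dist y₂ x))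
    (hloc : ∀ s : ℝ, (X ∩ closedBall x s).Finite)
    (hne : {r : ℝ | 0 < r ∧ ∀ i, k + 1 ≤ (X ∩ closedBall x r ∩ C i).ncard}.Nonempty)
    (hYX : Y ⊆ X) (hXY : ∀ r < dist x y, X ∩ closedBall x r ⊆ Y) (h : knnAdj k Y x y) :
    dist x y ≤ sInf {r : ℝ | 0 < r ∧ ∀ i, k + 1 ≤ (X ∩ closedBall x r ∩ C i).ncard} := by
  by_contra! hlt
  obtain ⟨r, ⟨-, hr⟩, hry⟩ := exists_lt_of_csInf_lt hne hlt
  exact not_knnAdj_of_lt_dist hcover hcone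
    (fun s => (hloc s).subset (inter_subset_inter_left _ hYX)) hr (hXY r hry) hry h

end

open Metric in
theorem knn_degree_local_general {d N k : ℕ}
    (X : Set (EuclideanSpace ℝ (Fin d))) (x : EuclideanSpace ℝ (Fin d))
    (hloc : ∀ r : ℝ, (X ∩ closedBall x r).Finite)
    (C : Fin N → Set (EuclideanSpace ℝ (Fin d)))
    (hcover : (⋃ i, C i) = Set.univ)
    (hcone : ∀ i, ∀ y₁ ∈ C i, ∀ y₂ ∈ C i, dist y₁ y₂ ≤ max (dist y₁ x) (dist y₂ x))
    (hne : {r : ℝ | 0 < r ∧ ∀ i, k + 1 ≤ (X ∩ closedBall x r ∩ C i).ncard}.Nonempty) :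
    let R := 2 * sInf {r : ℝ | 0 < r ∧ ∀ i, k + 1 ≤ (X ∩ closedBall x r ∩ C i).ncard}
    knnDeg k X x = knnDeg k (X ∩ closedBall x R) x := by
  intro R
  unfold knnDeg
  congr 1
  ext y
  by_cases hy : dist x y ≤ R / 2
  · exact (knnAdj_inter_closedBall_iff (by linarith)).symm
  · refine iff_of_false (fun h => hy ?_) (fun h => hy ?_)
    · linarith [dist_le_sInf_of_knnAdj hcover hcone hloc hne subset_rfl
        (fun _ _ => inter_subset_left) h]
    · have hyR : dist x y ≤ R := mem_closedBall'.1 h.2.1.2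
      linarith [dist_le_sInf_of_knnAdj hcover hcone hloc hne inter_subset_left
        (fun _ hr => inter_subset_inter_right _ (closedBall_subset_closedBall (hr.le.trans hyR)))
        h]

open Metric in
/-- Let `𝒳 ⊂ ℝ^d` be locally finite with pairwise distinct interpoint
distances, `x ∈ 𝒳`, and let `Cone₁(x),…,Cone_N(x)` be a cover of `ℝ^d` by cones of angle
`π/3` with apex `x`.  With
`R(x;𝒳) = 2·inf { r > 0 : |𝒳 ∩ B_r(x) ∩ Cone_i(x)| ≥ k+1 for all i }`,
the degree of `x` in the `k`-NN graph is determined locally: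
`deg(x;𝒳) = deg(x; 𝒳 ∩ B_{R(x;𝒳)}(x))`. -/
theorem knn_degree_local {d N k : ℕ}
    (X : Set (EuclideanSpace ℝ (Fin d))) (x : EuclideanSpace ℝ (Fin d)) (hx : x ∈ X)
    (hloc : ∀ r : ℝ, (X ∩ closedBall x r).Finite)
    (hdist : ∀ p ∈ X, ∀ q ∈ X, ∀ r ∈ X, ∀ s ∈ X, p ≠ q → r ≠ s →
      dist p q = dist r s → (p = r ∧ q = s) ∨ (p = s ∧ q = r))
    (C : Fin N → Set (EuclideanSpace ℝ (Fin d)))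
    (hcover : (⋃ i, C i) = Set.univ)
    (hcone : ∀ i, ∀ y₁ ∈ C i, ∀ y₂ ∈ C i, dist y₁ y₂ ≤ max (dist y₁ x) (dist y₂ x))
    (hne : {r : ℝ | 0 < r ∧ ∀ i, k + 1 ≤ (X ∩ closedBall x r ∩ C i).ncard}.Nonempty) :
    let R := 2 * sInf {r : ℝ | 0 < r ∧ ∀ i, k + 1 ≤ (X ∩ closedBall x r ∩ C i).ncard}
    knnDeg k X x = knnDeg k (X ∩ closedBall x R) x :=
  knn_degree_local_general X x hloc C hcover hcone hne
end

section
/- Let (b₁,d₁),…,(b_m,d_m) be real intervals with 1 ≤ b_m ≤ … ≤ b₁ and d₁ ≤ d₂ ≤ … ≤ d_m (nested), and let d'₁ ≤ d₁ with d'_j = d_{j−1} for j > 1 define modified intervals (b_j, d'_j). Fix α > 1 and let j₀ be the smallest index with d_{j₀}/b_{j₀} ≥ α. Then for every j ≠ j₀: d_j/b_j ≥ α if and only if d'_j/b_j ≥ α. Consequently, the number of indices j with d_j/b_j ≥ α and the number with d'_j/b_j ≥ α differ by at most 1. -/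
/-!
Below `j₀` the cascade can only lower a death time, so ratios already below `α` stay below it.
Above `j₀` both the old death `d j` and the new one `d (j - 1)` are at least `d j₀`, while
`b j ≤ b j₀`; hence both ratios dominate `d j₀ / b j₀ ≥ α`. So the two threshold predicates
agree off `j₀`, and their counts differ by at most one.
-/

open Finset

theorem Finset.abs_card_filter_sub_card_filter_le_one {ι : Type*} [DecidableEq ι] (s : Finset ι)
    {p q : ι → Prop} [DecidablePred p] [DecidablePred q] (a : ι)
    (hpq : ∀ i, i ≠ a → (p i ↔ q i)) :
    |(#(s.filter p) : ℤ) - #(s.filter q)| ≤ 1 := by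
  have herase : (s.filter p).erase a = (s.filter q).erase a := by
    ext i
    simp only [mem_erase, mem_filter]
    exact and_congr_right fun hi => and_congr_right fun _ => hpq i hi
  have hp₁ := pred_card_le_card_erase (s := s.filter p) (a := a)
  have hp₂ := card_erase_le (s := s.filter p) (a := a)
  have hq₁ := pred_card_le_card_erase (s := s.filter q) (a := a)
  have hq₂ := card_erase_le (s := s.filter q) (a := a)
  rw [herase] at hp₁ hp₂
  rw [abs_le]
  omega

theorem le_div_of_le_div_of_nested {α bi bj di dj : ℝ} (hα : 0 < α) (hbj : 0 < bj)
    (hb : bj ≤ bi) (hd : di ≤ dj) (h : α ≤ di / bi) : α ≤ dj / bj := by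
  rw [le_div_iff₀ (hbj.trans_le hb)] at h
  rw [le_div_iff₀ hbj]
  calc α * bj ≤ α * bi := by gcongr
    _ ≤ dj := h.trans hd

section Cascade

variable {m : ℕ} {d d' : Fin m → ℝ}

theorem cascade_le (hd : Monotone d) (hd'0 : ∀ h0 : 0 < m, d' ⟨0, h0⟩ ≤ d ⟨0, h0⟩)
    (hd' : ∀ j : Fin m, 0 < (j : ℕ) →
      d' j = d ⟨(j : ℕ) - 1, lt_of_le_of_lt (Nat.sub_le _ _) j.2⟩)
    (j : Fin m) : d' j ≤ d j := by
  rcases Nat.eq_zero_or_pos j with hj | hj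
  · have hm : 0 < m := j.pos
    obtain rfl : j = ⟨0, hm⟩ := Fin.ext hj
    exact hd'0 hm
  · rw [hd' j hj]
    exact hd (Fin.mk_le_mk.mpr (Nat.sub_le _ _))

theorem le_cascade_of_lt (hd : Monotone d)
    (hd' : ∀ j : Fin m, 0 < (j : ℕ) →
      d' j = d ⟨(j : ℕ) - 1, lt_of_le_of_lt (Nat.sub_le _ _) j.2⟩)
    {i j : Fin m} (hij : i < j) : d i ≤ d' j := by
  rw [hd' j (Nat.zero_le _ |>.trans_lt hij)]
  exact hd (Fin.mk_le_mk.mpr (Nat.le_sub_one_of_lt hij))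

end Cascade

open scoped Classical

/-- Let `(b₁,d₁),…,(b_m,d_m)` be intervals with
`1 ≤ b_m ≤ … ≤ b₁` and `d₁ ≤ d₂ ≤ … ≤ d_m`, and let `d'₁ ≤ d₁`, `d'_j = d_{j−1}` for
`j > 1` define modified intervals `(b_j, d'_j)`.  Fix `α > 1` and let `j₀` be the
smallest index with `d_{j₀}/b_{j₀} ≥ α`.  Then for every `j ≠ j₀`,
`d_j/b_j ≥ α ↔ d'_j/b_j ≥ α`; consequently the numbers of indices `j` with
`d_j/b_j ≥ α` and with `d'_j/b_j ≥ α` differ by at most `1`. -/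
theorem cascade_alpha_count_stable {m : ℕ} (b d d' : Fin m → ℝ)
    (hb1 : ∀ j, 1 ≤ b j)
    (hbanti : ∀ i j : Fin m, i ≤ j → b j ≤ b i)
    (hdmono : ∀ i j : Fin m, i ≤ j → d i ≤ d j)
    (hd'0 : ∀ h0 : 0 < m, d' ⟨0, h0⟩ ≤ d ⟨0, h0⟩)
    (hd' : ∀ j : Fin m, 0 < (j : ℕ) →
      d' j = d ⟨(j : ℕ) - 1, lt_of_le_of_lt (Nat.sub_le _ _) j.2⟩)
    (α : ℝ) (hα : 1 < α)
    (j₀ : Fin m) (hj₀ : α ≤ d j₀ / b j₀) (hmin : ∀ j, j < j₀ → d j / b j < α) :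
    (∀ j, j ≠ j₀ → (α ≤ d j / b j ↔ α ≤ d' j / b j)) ∧
      |((Finset.univ.filter fun j : Fin m => α ≤ d j / b j).card : ℤ) -
          ((Finset.univ.filter fun j : Fin m => α ≤ d' j / b j).card : ℤ)| ≤ 1 := by
  have hbpos : ∀ j, 0 < b j := fun j => one_pos.trans_le (hb1 j)
  have hαpos : 0 < α := one_pos.trans hα
  have agree : ∀ j, j ≠ j₀ → (α ≤ d j / b j ↔ α ≤ d' j / b j) := by
    intro j hj
    rcases hj.lt_or_gt with hlt | hgt
    · have hd'j : d' j / b j ≤ d j / b j :=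
        div_le_div_of_nonneg_right (cascade_le hdmono hd'0 hd' j) (hbpos j).le
      exact iff_of_false (hmin j hlt).not_ge fun h => (hmin j hlt).not_ge (h.trans hd'j)
    · exact iff_of_true
        (le_div_of_le_div_of_nested hαpos (hbpos j) (hbanti _ _ hgt.le) (hdmono _ _ hgt.le) hj₀)
        (le_div_of_le_div_of_nested hαpos (hbpos j) (hbanti _ _ hgt.le)
          (le_cascade_of_lt hdmono hd' hgt) hj₀)
  exact ⟨agree, Finset.abs_card_filter_sub_card_filter_le_one _ j₀ agree⟩
end

section
/- Let 𝓗 be a functional on finite point sets of ℝ^d and 𝒳_n i.i.d. from density f, and suppose: (i) |𝓗_n(𝒳_n)| ≤ C₃n^q a.s.; (ii) there are events A_n with P(A_n^c) ≤ e^{−n^a} and |𝓗_n(𝒳_n) − 𝓗_n(𝒳_{n±Δ})|1_{A_n} ≤ C₄Δn^b with b < 1/4 for Δ < n; (iii) for the Poisson process 𝒫_n with intensity n·f, (1/n)E[𝓗_n(𝒫_n)] → 𝓗*. Then (1/n)E[𝓗_n(𝒳_n)] → 𝓗*. -/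
/-!
Put `x m = E[𝓗_n(𝒳_m)]`, so that the Poisson quantity is the average of `x` against the
Poisson(n) weights `π_n`, and `|x n - ∑ π_n(m) x m| ≤ ∑ π_n(m) |x n - x m|`.
For `0 < m < 2n`, hypothesis (ii) gives `|x n - x m| ≤ C₄ n^b |m - n| + O(n^q e^{-n^a})`; since the
Poisson variance is `n`, the mean absolute deviation is at most `√n`, so these `m` contribute
`O(n^{b+1/2}) = o(n)`. The remaining `m` only carry the crude bound `C₃ (n^q + m^q)`, but their
Poisson mass is exponentially small: `π_n(0) = e^{-n}`, and `π_n(m) ≤ e^n 2^{-m}` because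
`(2n)^m / m! ≤ e^{2n}`, which for `m ≥ 2n` is at most `(e/4)^n 2^{-(m-2n)}`.
-/

open MeasureTheory ProbabilityTheory Filter Real Topology
open scoped NNReal Nat

set_option linter.deprecated false

lemma summable_add_one_rpow_mul_pow (q : ℝ) {ρ : ℝ} (hρ0 : 0 < ρ) (hρ1 : ρ < 1) :
    Summable (fun m : ℕ => ((m : ℝ) + 1) ^ q * ρ ^ m) := by
  set K := ⌈q⌉₊
  have hK : Summable (fun m : ℕ => ((m : ℝ) + 1) ^ K * ρ ^ m) := by
    have h := (summable_nat_add_iff 1).2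
      (summable_pow_mul_geometric_of_norm_lt_one K (r := ρ) (by rwa [norm_of_nonneg hρ0.le]))
    refine (h.mul_left ρ⁻¹).congr fun m => ?_
    field_simp
    push_cast
    ring
  refine hK.of_nonneg_of_le (fun m => by positivity) fun m => ?_
  gcongr
  rw [← Real.rpow_natCast]
  exact Real.rpow_le_rpow_of_exponent_le (by linarith [m.cast_nonneg (α := ℝ)]) (Nat.le_ceil q)

section Poisson

variable (r : ℝ≥0)

lemma hasSum_poissonPMFReal : HasSum (poissonPMFReal r) 1 := poissonPMFRealSum r

lemma poissonPMFReal_add_mul_descFactorial (m k : ℕ) :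
    poissonPMFReal r (m + k) * ((m + k).descFactorial k : ℝ) = r ^ k * poissonPMFReal r m := by
  have hfac : ((m + k)! : ℝ) = m ! * (m + k).descFactorial k := by
    exact_mod_cast
      (Nat.add_sub_cancel m k ▸ Nat.factorial_mul_descFactorial (Nat.le_add_left k m)).symm
  simp only [poissonPMFReal, hfac]
  have : (m ! : ℝ) ≠ 0 := by positivity
  have : ((m + k).descFactorial k : ℝ) ≠ 0 := by
    exact_mod_cast (Nat.descFactorial_pos.2 (Nat.le_add_left k m)).ne'
  field_simp
  ring

lemma hasSum_poissonPMFReal_mul_descFactorial (k : ℕ) :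
    HasSum (fun m : ℕ => poissonPMFReal r m * (m.descFactorial k : ℝ)) (r ^ k) := by
  have hshift : HasSum (fun m => poissonPMFReal r (m + k) * ((m + k).descFactorial k : ℝ))
      (r ^ k) := by
    simp only [poissonPMFReal_add_mul_descFactorial]
    simpa using (hasSum_poissonPMFReal r).mul_left ((r : ℝ) ^ k)
  have hhead : ∑ m ∈ Finset.range k, poissonPMFReal r m * (m.descFactorial k : ℝ) = 0 :=
    Finset.sum_eq_zero fun m hm => by
      simp [Nat.descFactorial_eq_zero_iff_lt.2 (Finset.mem_range.1 hm)]
  have h := (hasSum_nat_add_iff (f := fun m : ℕ => poissonPMFReal r m * (m.descFactorial k : ℝ))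
    k).1 hshift
  rwa [hhead, add_zero] at h

lemma hasSum_poissonPMFReal_mul_sub_sq :
    HasSum (fun m : ℕ => poissonPMFReal r m * ((m : ℝ) - r) ^ 2) r := by
  have h := ((hasSum_poissonPMFReal_mul_descFactorial r 2).add
    ((hasSum_poissonPMFReal_mul_descFactorial r 1).mul_left (1 - 2 * (r : ℝ)))).add
    ((hasSum_poissonPMFReal r).mul_left ((r : ℝ) ^ 2))
  convert h using 1
  · ext m
    rcases m with _ | m <;> simp [Nat.descFactorial] <;> ring
  · ring

lemma poissonPMFReal_mul_abs_sub_le (hr : 0 < r) (m : ℕ) :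
    poissonPMFReal r m * |(m : ℝ) - r| ≤
      (poissonPMFReal r m * ((m : ℝ) - r) ^ 2 + r * poissonPMFReal r m) / (2 * √r) := by
  have hs : 0 < √(r : ℝ) := Real.sqrt_pos.2 hr
  rw [le_div_iff₀ (by positivity)]
  have key : 2 * √(r : ℝ) * |(m : ℝ) - r| ≤ ((m : ℝ) - r) ^ 2 + r := by
    nlinarith [sq_nonneg (|(m : ℝ) - r| - √(r : ℝ)), sq_abs ((m : ℝ) - r),
      Real.sq_sqrt r.coe_nonneg]
  nlinarith [mul_le_mul_of_nonneg_left key (poissonPMFReal_nonneg (r := r) (n := m))]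

lemma summable_poissonPMFReal_mul_abs_sub (hr : 0 < r) :
    Summable (fun m : ℕ => poissonPMFReal r m * |(m : ℝ) - r|) :=
  .of_nonneg_of_le (fun _ => mul_nonneg poissonPMFReal_nonneg (abs_nonneg _))
    (poissonPMFReal_mul_abs_sub_le r hr)
    (((hasSum_poissonPMFReal_mul_sub_sq r).add
      ((hasSum_poissonPMFReal r).mul_left (r : ℝ))).div_const _).summable

lemma tsum_poissonPMFReal_mul_abs_sub_le (hr : 0 < r) :
    ∑' m : ℕ, poissonPMFReal r m * |(m : ℝ) - r| ≤ √r := by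
  have hs : 0 < √(r : ℝ) := Real.sqrt_pos.2 hr
  have hbound := ((hasSum_poissonPMFReal_mul_sub_sq r).add
    ((hasSum_poissonPMFReal r).mul_left (r : ℝ))).div_const (2 * √(r : ℝ))
  calc ∑' m : ℕ, poissonPMFReal r m * |(m : ℝ) - r|
      ≤ (r + r * 1) / (2 * √(r : ℝ)) :=
        hasSum_le (poissonPMFReal_mul_abs_sub_le r hr)
          (summable_poissonPMFReal_mul_abs_sub r hr).hasSum hbound
    _ = √r := by
        rw [div_eq_iff (by positivity)]
        nlinarith [Real.sq_sqrt r.coe_nonneg]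

lemma sum_poissonPMFReal_mul_abs_sub_add_le (hr : 0 < r) (s : Finset ℕ) {α β : ℝ}
    (hα : 0 ≤ α) (hβ : 0 ≤ β) :
    ∑ m ∈ s, poissonPMFReal r m * (α * |(m : ℝ) - r| + β) ≤ α * √r + β := by
  have hsum : HasSum (fun m => α * (poissonPMFReal r m * |(m : ℝ) - r|) + β * poissonPMFReal r m)
      (α * ∑' m : ℕ, poissonPMFReal r m * |(m : ℝ) - r| + β * 1) :=
    ((summable_poissonPMFReal_mul_abs_sub r hr).hasSum.mul_left α).add
      ((hasSum_poissonPMFReal r).mul_left β)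
  calc _ = ∑ m ∈ s, (α * (poissonPMFReal r m * |(m : ℝ) - r|) + β * poissonPMFReal r m) :=
        Finset.sum_congr rfl fun m _ => by ring
    _ ≤ α * ∑' m : ℕ, poissonPMFReal r m * |(m : ℝ) - r| + β * 1 :=
        sum_le_hasSum s (fun m _ => by
          have := poissonPMFReal_nonneg (r := r) (n := m); positivity) hsum
    _ ≤ α * √r + β := by rw [mul_one]; gcongr; exact tsum_poissonPMFReal_mul_abs_sub_le r hr

lemma poissonPMFReal_le_exp_mul_half_pow (m : ℕ) :
    poissonPMFReal r m ≤ exp r * (1 / 2) ^ m := by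
  have h := Real.pow_div_factorial_le_exp (x := 2 * r) (by positivity) m
  calc poissonPMFReal r m = exp (-r) * (1 / 2) ^ m * ((2 * r) ^ m / m !) := by
        rw [poissonPMFReal, mul_pow]; field_simp; rw [mul_assoc, ← mul_pow]; norm_num
    _ ≤ exp (-r) * (1 / 2) ^ m * exp (2 * r) := by gcongr
    _ = exp r * (1 / 2) ^ m := by
        rw [mul_right_comm, ← Real.exp_add]; ring_nf

lemma poissonPMFReal_mul_rpow_le {q : ℝ} (hq : 0 ≤ q) (m : ℕ) :
    poissonPMFReal r m * (m : ℝ) ^ q ≤ exp r * (((m : ℝ) + 1) ^ q * (1 / 2) ^ m) := by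
  have hm : (m : ℝ) ^ q ≤ ((m : ℝ) + 1) ^ q := by gcongr; linarith
  calc poissonPMFReal r m * (m : ℝ) ^ q ≤ exp r * (1 / 2) ^ m * ((m : ℝ) + 1) ^ q := by
        gcongr
        exact poissonPMFReal_le_exp_mul_half_pow r m
    _ = exp r * (((m : ℝ) + 1) ^ q * (1 / 2) ^ m) := by ring

lemma summable_poissonPMFReal_mul_rpow {q : ℝ} (hq : 0 ≤ q) :
    Summable (fun m : ℕ => poissonPMFReal r m * (m : ℝ) ^ q) :=
  .of_nonneg_of_le (fun _ => mul_nonneg poissonPMFReal_nonneg (by positivity))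
    (poissonPMFReal_mul_rpow_le r hq)
    ((summable_add_one_rpow_mul_pow q (by norm_num) (by norm_num)).mul_left _)

end Poisson

lemma poissonPMFReal_add_two_mul_le (n j : ℕ) :
    poissonPMFReal n (j + 2 * n) ≤ exp (-(log 4 - 1) * n) * (1 / 2) ^ j := by
  have h4 : exp (-log 4 * n) = (1 / 2) ^ (2 * n) := by
    rw [mul_comm, Real.exp_nat_mul, Real.exp_neg, Real.exp_log (by norm_num), pow_mul]
    norm_num
  calc poissonPMFReal n (j + 2 * n) ≤ exp (n : ℝ) * (1 / 2) ^ (j + 2 * n) := by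
        simpa using poissonPMFReal_le_exp_mul_half_pow n (j + 2 * n)
    _ = exp (-(log 4 - 1) * n) * (1 / 2) ^ j := by
        rw [pow_add, ← h4, neg_mul, neg_sub, sub_mul, Real.exp_sub, ← neg_mul]
        field_simp
        rw [← Real.exp_add, neg_add_cancel, Real.exp_zero]

lemma tendsto_tsum_poissonPMFReal_mul_rpow_tail {q : ℝ} (hq : 0 ≤ q) :
    Tendsto (fun n : ℕ => ∑' j : ℕ, poissonPMFReal n (j + 2 * n) * ((j + 2 * n : ℕ) : ℝ) ^ q)
      atTop (𝓝 0) := by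
  set c := ∑' j : ℕ, ((j : ℝ) + 1) ^ q * (1 / 2) ^ j
  have hc := summable_add_one_rpow_mul_pow q (ρ := 1 / 2) (by norm_num) (by norm_num)
  have hlog : 0 < log 4 - 1 := by
    rw [sub_pos, Real.lt_log_iff_exp_lt (by norm_num)]
    linarith [Real.exp_one_lt_d9]
  have hbound : ∀ n : ℕ, 1 ≤ n →
      ∑' j : ℕ, poissonPMFReal n (j + 2 * n) * ((j + 2 * n : ℕ) : ℝ) ^ q ≤
        c * 2 ^ q * ((n : ℝ) ^ q * exp (-(log 4 - 1) * n)) := by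
    intro n hn
    have hpt : ∀ j : ℕ, poissonPMFReal n (j + 2 * n) * ((j + 2 * n : ℕ) : ℝ) ^ q ≤
        2 ^ q * ((n : ℝ) ^ q * exp (-(log 4 - 1) * n)) * (((j : ℝ) + 1) ^ q * (1 / 2) ^ j) := by
      intro j
      have hbase : ((j + 2 * n : ℕ) : ℝ) ≤ 2 * n * ((j : ℝ) + 1) := by
        have : (1 : ℝ) ≤ n := by exact_mod_cast hn
        push_cast
        nlinarith
      calc poissonPMFReal n (j + 2 * n) * ((j + 2 * n : ℕ) : ℝ) ^ q
          ≤ exp (-(log 4 - 1) * n) * (1 / 2) ^ j * (2 * n * ((j : ℝ) + 1)) ^ q := by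
            gcongr
            exact poissonPMFReal_add_two_mul_le n j
        _ = _ := by
            rw [Real.mul_rpow (by positivity) (by positivity),
              Real.mul_rpow (by positivity) (by positivity)]
            ring
    calc _ ≤ ∑' j : ℕ, 2 ^ q * ((n : ℝ) ^ q * exp (-(log 4 - 1) * n)) *
            (((j : ℝ) + 1) ^ q * (1 / 2) ^ j) :=
          Summable.tsum_le_tsum hpt (.of_nonneg_of_le
            (fun j => mul_nonneg poissonPMFReal_nonneg (by positivity)) hpt
            (hc.mul_left _)) (hc.mul_left _)
      _ = _ := by rw [tsum_mul_left]; ring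
  have hlim : Tendsto (fun n : ℕ => c * 2 ^ q * ((n : ℝ) ^ q * exp (-(log 4 - 1) * n)))
      atTop (𝓝 0) := by
    simpa using ((tendsto_rpow_mul_exp_neg_mul_atTop_nhds_zero q _ hlog).comp
      tendsto_natCast_atTop_atTop).const_mul (c * 2 ^ q)
  refine squeeze_zero' (Eventually.of_forall fun n =>
    tsum_nonneg fun j => mul_nonneg poissonPMFReal_nonneg (by positivity))
    ((eventually_ge_atTop 1).mono hbound) hlim

lemma abs_sub_tsum_mul_le_tsum_mul_abs_sub {ι : Type*} {p x : ι → ℝ} (c : ℝ) (hp0 : ∀ i, 0 ≤ p i)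
    (hp : HasSum p 1) (hpx : Summable (fun i => p i * x i)) :
    |c - ∑' i, p i * x i| ≤ ∑' i, p i * |c - x i| := by
  have h : HasSum (fun i => p i * (c - x i)) (c - ∑' i, p i * x i) := by
    simpa [mul_sub] using (hp.mul_right c).sub hpx.hasSum
  rw [← h.tsum_eq]
  refine (norm_tsum_le_tsum_norm h.summable.norm).trans_eq (tsum_congr fun i => ?_)
  rw [Real.norm_eq_abs, abs_mul, abs_of_nonneg (hp0 i)]

section Deviation

variable {n : ℕ} {x : ℕ → ℝ} {C q : ℝ}

lemma summable_poissonPMFReal_mul_of_abs_le_rpow (hq : 0 ≤ q)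
    (hx : ∀ m, |x m| ≤ C * (m : ℝ) ^ q) :
    Summable (fun m => poissonPMFReal n m * x m) := by
  refine .of_norm_bounded ((summable_poissonPMFReal_mul_rpow n hq).mul_left C) fun m => ?_
  rw [Real.norm_eq_abs, abs_mul, abs_of_nonneg poissonPMFReal_nonneg]
  nlinarith [hx m, poissonPMFReal_nonneg (r := n) (n := m)]

lemma sum_range_poissonPMFReal_mul_abs_sub_le (hn : 1 ≤ n) {α β : ℝ} (hα : 0 ≤ α) (hβ : 0 ≤ β)
    (hq : 0 < q) (hx : ∀ m, |x m| ≤ C * (m : ℝ) ^ q)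
    (hnear : ∀ m, 0 < m → m < 2 * n → |x n - x m| ≤ α * |(m : ℝ) - n| + β) :
    ∑ m ∈ Finset.range (2 * n), poissonPMFReal n m * |x n - x m| ≤
      C * ((n : ℝ) ^ q * exp (-n)) + (α * √n + β) := by
  rw [Finset.range_eq_Ico, Finset.sum_eq_sum_Ico_succ_bot (by omega)]
  refine add_le_add ?_ ((Finset.sum_le_sum fun m hm => ?_).trans
    (sum_poissonPMFReal_mul_abs_sub_add_le n (by exact_mod_cast hn) _ hα hβ))
  · have hx0 : x 0 = 0 := abs_nonpos_iff.1 (by simpa [Real.zero_rpow hq.ne'] using hx 0)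
    calc poissonPMFReal n 0 * |x n - x 0| = |x n| * exp (-n) := by
          simp [poissonPMFReal, hx0, mul_comm]
      _ ≤ C * (n : ℝ) ^ q * exp (-n) := by gcongr; exact hx n
      _ = _ := by ring
  · obtain ⟨hm1, hm2⟩ := Finset.mem_Ico.1 hm
    exact mul_le_mul_of_nonneg_left (by simpa using hnear m hm1 hm2) poissonPMFReal_nonneg

lemma tsum_poissonPMFReal_add_two_mul_mul_abs_sub_le (hC : 0 ≤ C) (hq : 0 ≤ q)
    (hx : ∀ m, |x m| ≤ C * (m : ℝ) ^ q) :
    ∑' j, poissonPMFReal n (j + 2 * n) * |x n - x (j + 2 * n)| ≤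
      C * (2 * ∑' j : ℕ, poissonPMFReal n (j + 2 * n) * ((j + 2 * n : ℕ) : ℝ) ^ q) := by
  have hpt : ∀ j, poissonPMFReal n (j + 2 * n) * |x n - x (j + 2 * n)| ≤
      C * 2 * (poissonPMFReal n (j + 2 * n) * ((j + 2 * n : ℕ) : ℝ) ^ q) := fun j => by
    have hnm : (n : ℝ) ^ q ≤ ((j + 2 * n : ℕ) : ℝ) ^ q := by gcongr; linarith
    have hdiff : |x n - x (j + 2 * n)| ≤ C * (2 * ((j + 2 * n : ℕ) : ℝ) ^ q) :=
      (abs_sub _ _).trans (by nlinarith [hx n, hx (j + 2 * n)])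
    nlinarith [mul_le_mul_of_nonneg_left hdiff (poissonPMFReal_nonneg (r := n) (n := j + 2 * n))]
  have hsum := ((summable_nat_add_iff (2 * n)).2 (summable_poissonPMFReal_mul_rpow n hq)).mul_left
    (C * 2)
  rw [← mul_assoc, ← tsum_mul_left]
  exact Summable.tsum_le_tsum hpt (.of_nonneg_of_le
    (fun _ => mul_nonneg poissonPMFReal_nonneg (abs_nonneg _)) hpt hsum) hsum

lemma abs_sub_tsum_poissonPMFReal_mul_le (hn : 1 ≤ n) {α β : ℝ} (hα : 0 ≤ α) (hβ : 0 ≤ β)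
    (hC : 0 ≤ C) (hq : 0 < q) (hx : ∀ m, |x m| ≤ C * (m : ℝ) ^ q)
    (hnear : ∀ m, 0 < m → m < 2 * n → |x n - x m| ≤ α * |(m : ℝ) - n| + β) :
    |x n - ∑' m, poissonPMFReal n m * x m| ≤ α * √n + β + C * ((n : ℝ) ^ q * exp (-n) +
      2 * ∑' j : ℕ, poissonPMFReal n (j + 2 * n) * ((j + 2 * n : ℕ) : ℝ) ^ q) := by
  have hd : Summable (fun m => poissonPMFReal n m * |x n - x m|) :=
    .of_nonneg_of_le (fun m => mul_nonneg poissonPMFReal_nonneg (abs_nonneg _))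
      (fun m => mul_le_mul_of_nonneg_left ((abs_sub _ _).trans (add_le_add (hx n) (hx m)))
        poissonPMFReal_nonneg)
      ((((hasSum_poissonPMFReal n).summable.mul_right (C * (n : ℝ) ^ q)).add
        ((summable_poissonPMFReal_mul_rpow n hq.le).mul_left C)).congr fun m => by ring)
  calc |x n - ∑' m, poissonPMFReal n m * x m| ≤ ∑' m, poissonPMFReal n m * |x n - x m| :=
        abs_sub_tsum_mul_le_tsum_mul_abs_sub _ (fun _ => poissonPMFReal_nonneg)
          (hasSum_poissonPMFReal n) (summable_poissonPMFReal_mul_of_abs_le_rpow hq.le hx)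
    _ = ∑ m ∈ Finset.range (2 * n), poissonPMFReal n m * |x n - x m| +
          ∑' j, poissonPMFReal n (j + 2 * n) * |x n - x (j + 2 * n)| :=
        (hd.sum_add_tsum_nat_add _).symm
    _ ≤ _ := by
        linarith [sum_range_poissonPMFReal_mul_abs_sub_le hn hα hβ hq hx hnear,
          tsum_poissonPMFReal_add_two_mul_mul_abs_sub_le (n := n) hC hq.le hx]

end Deviation

lemma abs_integral_sub_integral_le {Ω : Type*} [MeasurableSpace Ω] {P : Measure Ω}
    [IsProbabilityMeasure P] {f g : Ω → ℝ} {A : Set Ω} {D F G : ℝ} (hf : Integrable f P)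
    (hg : Integrable g P) (hA : MeasurableSet A) (hD : 0 ≤ D)
    (hfgA : ∀ᵐ ω ∂P, ω ∈ A → |f ω - g ω| ≤ D) (hF : ∀ᵐ ω ∂P, |f ω| ≤ F)
    (hG : ∀ᵐ ω ∂P, |g ω| ≤ G) :
    |∫ ω, f ω ∂P - ∫ ω, g ω ∂P| ≤ D + (F + G) * P.real Aᶜ := by
  have hsplit := integral_add_compl hA (hf.sub hg)
  simp only [Pi.sub_apply] at hsplit
  simp only [← Real.norm_eq_abs] at hfgA hF hG ⊢
  rw [← integral_sub hf hg, ← hsplit]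
  refine (norm_add_le _ _).trans (add_le_add ?_ ?_)
  · exact (norm_setIntegral_le_of_norm_le_const_ae' (measure_lt_top _ _) hfgA).trans
      (mul_le_of_le_one_right hD measureReal_le_one)
  · refine norm_setIntegral_le_of_norm_le_const_ae' (measure_lt_top _ _) ?_
    filter_upwards [hF, hG] with ω hfω hgω _
    exact (norm_sub_le _ _).trans (add_le_add hfω hgω)

lemma tendsto_rpow_mul_exp_neg_rpow (q : ℝ) {a : ℝ} (ha : 0 < a) :
    Tendsto (fun x : ℝ => x ^ q * exp (-x ^ a)) atTop (𝓝 0) := by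
  refine ((tendsto_rpow_mul_exp_neg_mul_atTop_nhds_zero (q / a) 1 one_pos).comp
    (tendsto_rpow_atTop ha)).congr' ?_
  filter_upwards [eventually_ge_atTop 0] with x hx
  simp [← Real.rpow_mul hx, mul_div_cancel₀ _ ha.ne']

lemma tendsto_rpow_div_sqrt {b : ℝ} (hb : b < 1 / 2) :
    Tendsto (fun n : ℕ => (n : ℝ) ^ b / √n) atTop (𝓝 0) := by
  refine ((tendsto_rpow_neg_atTop (y := 1 / 2 - b) (by linarith)).comp
    tendsto_natCast_atTop_atTop).congr' ?_
  filter_upwards [eventually_gt_atTop 0] with n hn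
  rw [Function.comp_apply, Real.sqrt_eq_rpow, ← Real.rpow_sub (by exact_mod_cast hn)]
  ring_nf

theorem tendsto_one_div_mul_sub_tsum_poissonPMFReal {x : ℕ → ℕ → ℝ} {C q : ℝ} {α β : ℕ → ℝ}
    (hC : 0 ≤ C) (hq : 0 < q) (hx : ∀ n m, |x n m| ≤ C * (m : ℝ) ^ q) (hα0 : ∀ n, 0 ≤ α n)
    (hβ0 : ∀ n, 0 ≤ β n)
    (hnear : ∀ n m, 0 < m → m < 2 * n → |x n n - x n m| ≤ α n * |(m : ℝ) - n| + β n)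
    (hα : Tendsto (fun n => α n / √n) atTop (𝓝 0)) (hβ : Tendsto β atTop (𝓝 0)) :
    Tendsto (fun n : ℕ => 1 / (n : ℝ) * (x n n - ∑' m, poissonPMFReal n m * x n m))
      atTop (𝓝 0) := by
  have hfar := ((((tendsto_rpow_mul_exp_neg_mul_atTop_nhds_zero q 1 one_pos).comp
    tendsto_natCast_atTop_atTop).add
      ((tendsto_tsum_poissonPMFReal_mul_rpow_tail hq.le).const_mul 2)).const_mul C)
  have hlim := hα.add (tendsto_one_div_atTop_nhds_zero_nat.mul (hβ.add hfar))
  simp only [Function.comp_apply, neg_mul, one_mul, add_zero, mul_zero] at hlim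
  refine squeeze_zero_norm' (Eventually.mono (eventually_ge_atTop 1) fun n hn => ?_) hlim
  have hn' : (0 : ℝ) < n := by exact_mod_cast hn
  have hsqrt : 1 / (n : ℝ) * (α n * √n) = α n / √n := by
    field_simp
    rw [Real.sq_sqrt hn'.le, mul_comm]
  rw [norm_mul, Real.norm_eq_abs, Real.norm_eq_abs, abs_of_pos (by positivity), ← hsqrt,
    ← mul_add]
  gcongr
  exact (abs_sub_tsum_poissonPMFReal_mul_le hn (hα0 n) (hβ0 n) hC hq (hx n) (hnear n)).trans_eq
    (by ring)

theorem dePoissonization_general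
    {Ω : Type*} [MeasurableSpace Ω] (P : Measure Ω) [IsProbabilityMeasure P]
    {E : Type*} [MeasurableSpace E]
    (X : ℕ → Ω → E) (hXmeas : ∀ i, Measurable (X i))
    (H : (n m : ℕ) → (Fin m → E) → ℝ) (hHmeas : ∀ n m, Measurable (H n m))
    (C₃ q : ℝ) (hC₃ : 0 < C₃) (hq : 0 < q)
    (hbound : ∀ n m : ℕ, ∀ᵐ ω ∂P, |H n m (fun j => X j ω)| ≤ C₃ * (m : ℝ) ^ q)
    (a : ℝ) (ha : 0 < a)
    (A : ℕ → Set Ω) (hAmeas : ∀ n, MeasurableSet (A n))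
    (hA : ∀ n : ℕ, P (A n)ᶜ ≤ ENNReal.ofReal (Real.exp (-(n : ℝ) ^ a)))
    (C₄ b : ℝ) (hC₄ : 0 < C₄) (hb : b < 1 / 4)
    (hdiff : ∀ n : ℕ, ∀ᵐ ω ∂P, ω ∈ A n → ∀ m : ℕ, |(m : ℤ) - (n : ℤ)| < (n : ℤ) →
      |H n n (fun j => X j ω) - H n m (fun j => X j ω)| ≤
        C₄ * |(m : ℝ) - (n : ℝ)| * (n : ℝ) ^ b)
    (Hstar : ℝ)
    (hpois : Tendsto
      (fun n : ℕ => (1 / (n : ℝ)) *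
        ∑' m : ℕ, poissonPMFReal (n : ℝ≥0) m * ∫ ω, H n m (fun j => X j ω) ∂P)
      atTop (nhds Hstar)) :
    Tendsto (fun n : ℕ => (1 / (n : ℝ)) * ∫ ω, H n n (fun j => X j ω) ∂P)
      atTop (nhds Hstar) := by
  have hbound' : ∀ n m : ℕ, ∀ᵐ ω ∂P, ‖H n m (fun j => X j ω)‖ ≤ C₃ * (m : ℝ) ^ q := hbound
  have hint : ∀ n m, Integrable (fun ω => H n m (fun j => X j ω)) P := fun n m =>
    .of_bound ((hHmeas n m).comp (measurable_pi_lambda _ fun j => hXmeas j)).aestronglyMeasurable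
      _ (hbound' n m)
  have hnear : ∀ n m, 0 < m → m < 2 * n →
      |∫ ω, H n n (fun j => X j ω) ∂P - ∫ ω, H n m (fun j => X j ω) ∂P| ≤
        C₄ * (n : ℝ) ^ b * |(m : ℝ) - n| +
          C₃ * (1 + 2 ^ q) * ((n : ℝ) ^ q * exp (-(n : ℝ) ^ a)) := by
    intro n m hm0 hm
    have hPA : P.real (A n)ᶜ ≤ exp (-(n : ℝ) ^ a) :=
      ENNReal.toReal_le_of_le_ofReal (exp_pos _).le (hA n)
    have hmq : (m : ℝ) ^ q ≤ 2 ^ q * (n : ℝ) ^ q := by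
      rw [← Real.mul_rpow (by norm_num) n.cast_nonneg]
      gcongr
      exact_mod_cast hm.le
    have hdev := abs_integral_sub_integral_le (D := C₄ * |(m : ℝ) - n| * n ^ b) (hint n n)
      (hint n m) (hAmeas n) (by positivity)
      (by filter_upwards [hdiff n] with ω h hω using h hω m (abs_lt.2 ⟨by omega, by omega⟩))
      (hbound n n) (hbound n m)
    have hsum : C₃ * n ^ q + C₃ * m ^ q ≤ C₃ * (1 + 2 ^ q) * n ^ q := by nlinarith
    nlinarith [mul_le_mul hsum hPA measureReal_nonneg (by positivity)]
  have hdePois := tendsto_one_div_mul_sub_tsum_poissonPMFReal (α := fun n => C₄ * (n : ℝ) ^ b)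
    (β := fun n => C₃ * (1 + 2 ^ q) * ((n : ℝ) ^ q * exp (-(n : ℝ) ^ a))) hC₃.le hq
    (fun n m => by simpa using norm_integral_le_of_norm_le_const (hbound' n m))
    (fun n => by positivity) (fun n => by positivity) hnear
    (by simpa only [mul_div_assoc, mul_zero] using
      (tendsto_rpow_div_sqrt (b := b) (by linarith)).const_mul C₄)
    (by simpa using ((tendsto_rpow_mul_exp_neg_rpow q ha).comp
      tendsto_natCast_atTop_atTop).const_mul (C₃ * (1 + 2 ^ q)))
  simpa [mul_sub] using hpois.add hdePois

/-- **de-Poissonization.** Let `𝓗` be a functional on finite point sets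
of `ℝ^d` and `𝒳_n` an i.i.d. sample from a density.  Suppose (i) `|𝓗_n(𝒳_m)| ≤ C₃ m^q`
a.s.; (ii) there are events `A_n` with `P(A_nᶜ) ≤ e^{−n^a}` and
`|𝓗_n(𝒳_n) − 𝓗_n(𝒳_{n±Δ})|·1_{A_n} ≤ C₄ Δ n^b` for `Δ < n`, with `b < 1/4`; and
(iii) for the Poisson process `𝒫_n` with intensity `n·f` (i.e. `𝒳_N` with
`N ∼ Poisson(n)`), `(1/n)·E[𝓗_n(𝒫_n)] → 𝓗*`.  Then `(1/n)·E[𝓗_n(𝒳_n)] → 𝓗*`. -/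
theorem dePoissonization
    {Ω : Type*} [MeasurableSpace Ω] (P : Measure Ω) [IsProbabilityMeasure P]
    {E : Type*} [MeasurableSpace E]
    (X : ℕ → Ω → E) (hXmeas : ∀ i, Measurable (X i))
    (hindep : iIndepFun X P)
    (μ : Measure E) (hident : ∀ i, Measure.map (X i) P = μ)
    (H : (n m : ℕ) → (Fin m → E) → ℝ) (hHmeas : ∀ n m, Measurable (H n m))
    (C₃ q : ℝ) (hC₃ : 0 < C₃) (hq : 0 < q)
    (hbound : ∀ n m : ℕ, ∀ᵐ ω ∂P, |H n m (fun j => X j ω)| ≤ C₃ * (m : ℝ) ^ q)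
    (a : ℝ) (ha : 0 < a)
    (A : ℕ → Set Ω) (hAmeas : ∀ n, MeasurableSet (A n))
    (hA : ∀ n : ℕ, P (A n)ᶜ ≤ ENNReal.ofReal (Real.exp (-(n : ℝ) ^ a)))
    (C₄ b : ℝ) (hC₄ : 0 < C₄) (hb : b < 1 / 4)
    (hdiff : ∀ n : ℕ, ∀ᵐ ω ∂P, ω ∈ A n → ∀ m : ℕ, |(m : ℤ) - (n : ℤ)| < (n : ℤ) →
      |H n n (fun j => X j ω) - H n m (fun j => X j ω)| ≤
        C₄ * |(m : ℝ) - (n : ℝ)| * (n : ℝ) ^ b)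
    (Hstar : ℝ)
    (hpois : Tendsto
      (fun n : ℕ => (1 / (n : ℝ)) *
        ∑' m : ℕ, poissonPMFReal (n : ℝ≥0) m * ∫ ω, H n m (fun j => X j ω) ∂P)
      atTop (nhds Hstar)) :
    Tendsto (fun n : ℕ => (1 / (n : ℝ)) * ∫ ω, H n n (fun j => X j ω) ∂P)
      atTop (nhds Hstar) :=
  dePoissonization_general P X hXmeas H hHmeas C₃ q hC₃ hq hbound a ha A hAmeas hA C₄ b hC₄ hb hdiff
    Hstar hpois
end

section
/- Let Ψ_rad : [0,∞) → [0,∞) be increasing on [R₀,∞) with Ψ_rad(τ) ≥ A₁ log τ for τ ≥ R₀ where A₁ > d, and Ψ'_rad(τ) ≥ A₂/τ for τ ≥ R₀. Then for R ≥ R₀: ∫_R^∞ τ^{d−1} e^{−Ψ_rad(τ)} dτ ≤ (1/A₂)·(1 − d/A₁)^{−1} · exp(−Ψ_rad(R)(1 − d/A₁)). -/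
open Real Set MeasureTheory Filter Topology

/-! Since `τ ≤ exp (Ψ τ / A₁)` and `1 / τ ≤ Ψ' τ / A₂`, the integrand is dominated by
`Ψ' τ · exp (-(1 - d / A₁) Ψ τ) / A₂`, which is the derivative of
`-exp (-(1 - d / A₁) Ψ τ) / (A₂ (1 - d / A₁))`; this antiderivative tends to `0` at infinity
because `Ψ τ ≥ A₁ log τ → ∞`. -/

theorem integral_Ioi_le_neg_of_le_hasDerivAt {f g g' : ℝ → ℝ} {a : ℝ}
    (hderiv : ∀ x ∈ Ici a, HasDerivAt g (g' x) x) (hf : ∀ x ∈ Ioi a, 0 ≤ f x)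
    (hfg : ∀ x ∈ Ioi a, f x ≤ g' x) (hg : Tendsto g atTop (𝓝 0)) :
    ∫ x in Ioi a, f x ≤ -g a := by
  have hderiv' : ∀ x ∈ Ioi a, HasDerivAt g (g' x) x := fun x hx => hderiv x (mem_Ici_of_Ioi hx)
  have hcont : ContinuousWithinAt g (Ici a) a :=
    (hderiv a self_mem_Ici).continuousAt.continuousWithinAt
  have hg' : ∀ x ∈ Ioi a, 0 ≤ g' x := fun x hx => (hf x hx).trans (hfg x hx)
  have hint : ∫ x in Ioi a, g' x = 0 - g a :=
    integral_Ioi_of_hasDerivAt_of_nonneg hcont hderiv' hg' hg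
  rw [← zero_sub, ← hint]
  by_cases hfi : IntegrableOn f (Ioi a)
  · exact setIntegral_mono_on hfi (integrableOn_Ioi_deriv_of_nonneg hcont hderiv' hg' hg)
      measurableSet_Ioi hfg
  · rw [integral_undef hfi]
    exact setIntegral_nonneg measurableSet_Ioi hg'

theorem hasDerivAt_neg_exp_neg_mul_div {Ψ : ℝ → ℝ} {ψ' c τ : ℝ} (hc : c ≠ 0)
    (h : HasDerivAt Ψ ψ' τ) :
    HasDerivAt (fun x => -exp (-(c * Ψ x)) / c) (ψ' * exp (-(c * Ψ τ))) τ := by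
  refine ((h.const_mul c).neg.exp.neg.div_const c).congr_deriv ?_
  field_simp
  exact mul_comm _ _

theorem pow_le_exp_of_mul_log_le {τ y A : ℝ} (n : ℕ) (hτ : 0 < τ) (hA : 0 < A)
    (h : A * log τ ≤ y) : τ ^ n ≤ exp (n / A * y) := by
  rw [← exp_log (pow_pos hτ n), log_pow]
  refine exp_le_exp.2 ?_
  rw [div_mul_eq_mul_div, le_div_iff₀ hA, mul_assoc, mul_comm (log τ)]
  exact mul_le_mul_of_nonneg_left h n.cast_nonneg

theorem pow_pred_mul_exp_neg_le {d : ℕ} (hd : 0 < d) {A₁ A₂ τ ψ ψ' : ℝ} (hA₁ : 0 < A₁)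
    (hA₂ : 0 < A₂) (hτ : 0 < τ) (hlog : A₁ * log τ ≤ ψ) (hψ' : A₂ / τ ≤ ψ') :
    τ ^ (d - 1) * exp (-ψ) ≤ 1 / A₂ * (ψ' * exp (-((1 - d / A₁) * ψ))) := by
  have hinv : τ⁻¹ ≤ ψ' / A₂ := by
    rwa [le_div_iff₀ hA₂, ← div_eq_inv_mul]
  calc τ ^ (d - 1) * exp (-ψ) = τ⁻¹ * (τ ^ d * exp (-ψ)) := by
        rw [← Nat.sub_add_cancel hd, pow_succ]
        field_simp
        simp
    _ ≤ ψ' / A₂ * (exp (d / A₁ * ψ) * exp (-ψ)) := by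
        gcongr
        · exact (inv_pos.2 hτ).le.trans hinv
        · exact pow_le_exp_of_mul_log_le d hτ hA₁ hlog
    _ = 1 / A₂ * (ψ' * exp (-((1 - d / A₁) * ψ))) := by
        rw [← exp_add]
        ring_nf

theorem tail_integral_bound_general {d : ℕ} (hd : 0 < d) (Ψ Ψ' : ℝ → ℝ) (A₁ A₂ R₀ R : ℝ)
    (hA₁ : (d : ℝ) < A₁) (hA₂ : 0 < A₂) (hR₀ : 0 < R₀) (hR : R₀ ≤ R)
    (hlog : ∀ τ : ℝ, R₀ ≤ τ → A₁ * Real.log τ ≤ Ψ τ)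
    (hderiv : ∀ τ : ℝ, R₀ ≤ τ → HasDerivAt Ψ (Ψ' τ) τ)
    (hΨ' : ∀ τ : ℝ, R₀ ≤ τ → A₂ / τ ≤ Ψ' τ) :
    ∫ τ in Ioi R, τ ^ (d - 1) * Real.exp (-Ψ τ) ≤
      (1 / A₂) * (1 - d / A₁)⁻¹ * Real.exp (-Ψ R * (1 - d / A₁)) := by
  have hA₁pos : 0 < A₁ := (Nat.cast_nonneg d).trans_lt hA₁
  set c := 1 - d / A₁
  have hc : 0 < c := sub_pos.2 ((div_lt_one hA₁pos).2 hA₁)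
  have hΨ_top : Tendsto Ψ atTop atTop :=
    tendsto_atTop_mono' _ ((eventually_ge_atTop R₀).mono hlog)
      (tendsto_log_atTop.const_mul_atTop hA₁pos)
  have hlim : Tendsto (fun x => 1 / A₂ * (-exp (-(c * Ψ x)) / c)) atTop (𝓝 0) := by
    simpa using ((tendsto_exp_neg_atTop_nhds_zero.comp
      (hΨ_top.const_mul_atTop hc)).neg.div_const c).const_mul (1 / A₂)
  have hR₀_le : ∀ x, R ≤ x → R₀ ≤ x := fun x hx => hR.trans hx
  have hbound := integral_Ioi_le_neg_of_le_hasDerivAt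
    (fun x hx => (hasDerivAt_neg_exp_neg_mul_div hc.ne' (hderiv x (hR₀_le x hx))).const_mul
      (1 / A₂))
    (fun x hx => by have := hR₀.trans_le (hR₀_le x hx.le); positivity)
    (fun x hx => pow_pred_mul_exp_neg_le hd hA₁pos hA₂ (hR₀.trans_le (hR₀_le x hx.le))
      (hlog x (hR₀_le x hx.le)) (hΨ' x (hR₀_le x hx.le))) hlim
  convert hbound using 1
  field_simp

/-- Let `Ψ_rad : [0,∞) → [0,∞)` be increasing on `[R₀,∞)` with
`Ψ_rad(τ) ≥ A₁ log τ` for `τ ≥ R₀` (where `A₁ > d`) and `Ψ'_rad(τ) ≥ A₂/τ` for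
`τ ≥ R₀`.  Then for `R ≥ R₀`:
`∫_R^∞ τ^{d−1} e^{−Ψ_rad(τ)} dτ ≤ (1/A₂)·(1 − d/A₁)⁻¹·exp(−Ψ_rad(R)(1 − d/A₁))`. -/
theorem tail_integral_bound {d : ℕ} (hd : 0 < d) (Ψ Ψ' : ℝ → ℝ) (A₁ A₂ R₀ R : ℝ)
    (hA₁ : (d : ℝ) < A₁) (hA₂ : 0 < A₂) (hR₀ : 0 < R₀) (hR : R₀ ≤ R)
    (hnonneg : ∀ τ : ℝ, 0 ≤ τ → 0 ≤ Ψ τ)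
    (hmono : MonotoneOn Ψ (Ici R₀))
    (hlog : ∀ τ : ℝ, R₀ ≤ τ → A₁ * Real.log τ ≤ Ψ τ)
    (hderiv : ∀ τ : ℝ, R₀ ≤ τ → HasDerivAt Ψ (Ψ' τ) τ)
    (hΨ' : ∀ τ : ℝ, R₀ ≤ τ → A₂ / τ ≤ Ψ' τ) :
    ∫ τ in Ioi R, τ ^ (d - 1) * Real.exp (-Ψ τ) ≤
      (1 / A₂) * (1 - d / A₁)⁻¹ * Real.exp (-Ψ R * (1 - d / A₁)) :=
  tail_integral_bound_general hd Ψ Ψ' A₁ A₂ R₀ R hA₁ hA₂ hR₀ hR hlog hderiv hΨ'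
end
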